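/- Subset space models embed into evidence models: given a subset space model (X, 𝒮, v), define for each U ∈ 𝒮 an evidence state e_U with I_{e_U}(x) = U for all x. Then (E1) holds, U_{e_U} = U, the evidence scenarios (x, e_U) correspond exactly to epistemic scenarios (x,U) with x ∈ U, and for all formulas φ: (x,U) ⊨ K φ in the subset space model iff (x, e_U) ⊨ Kφ in the evidence model iff (x, e_U) ⊨ Eφ in the evidence model. -/

import Mathlib

/-- Formulas of the language with atoms, ¬, ∧, E, K. -/
inductive Fm (P : Type) : Type
  | atom : P → Fm P
  | neg : Fm P → Fm P
  | conj : Fm P → Fm P → Fm P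
  | E : Fm P → Fm P
  | K : Fm P → Fm P

/-- Subset space semantics relative to a fixed epistemic range `U`:
`(x,U) ⊨ Kφ` iff `U ⊆ ⟦φ⟧^U`. (In subset space models the `E` modality
collapses to `K`, so it is interpreted the same way.) -/
def ssSat {X P : Type} (v : P → Set X) (U : Set X) : X → Fm P → Prop
  | x, Fm.atom p => x ∈ v p
  | x, Fm.neg φ => ¬ ssSat v U x φ
  | x, Fm.conj φ ψ => ssSat v U x φ ∧ ssSat v U x ψ
  | _, Fm.E φ => ∀ y ∈ U, ssSat v U y φ
  | _, Fm.K φ => ∀ y ∈ U, ssSat v U y φ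

/-- Evidence semantics for a single evidence state interpreted by `I`. -/
def evSat {X P : Type} (I : X → Set X) (v : P → Set X) : X → Fm P → Prop
  | x, Fm.atom p => x ∈ v p
  | x, Fm.neg φ => ¬ evSat I v x φ
  | x, Fm.conj φ ψ => evSat I v x φ ∧ evSat I v x ψ
  | x, Fm.E φ => ∀ y ∈ I x, y ∈ I y ∧ evSat I v y φ
  | _, Fm.K φ => ∀ y, y ∈ I y → evSat I v y φ

theorem ssSat_iff_evSat_const {X P : Type} (v : P → Set X) (U : Set X) (φ : Fm P) (x : X) :
    ssSat v U x φ ↔ evSat (fun _ : X => U) v x φ := by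
  induction φ generalizing x with
  | atom => rfl
  | neg φ ih => exact not_congr (ih x)
  | conj φ ψ ihφ ihψ => exact and_congr (ihφ x) (ihψ x)
  | E φ ih => exact forall₂_congr fun y hy => (ih y).trans (and_iff_right hy).symm
  | K φ ih => exact forall₂_congr fun y _ => ih y

theorem evSat_K_iff_E {X P : Type} {I : X → Set X} {v : P → Set X} {x : X} {φ : Fm P}
    (hx : I x = {y | y ∈ I y}) : evSat I v x (Fm.K φ) ↔ evSat I v x (Fm.E φ) := by
  simp only [evSat, hx, Set.mem_ofPred_eq]
  exact forall₂_congr fun y hy => (and_iff_right hy).symm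

theorem subset_space_to_evidence_general {X P : Type} (v : P → Set X)
    (U : Set X) :
    (∀ x y : X, y ∈ (fun _ : X => U) x → y ∈ (fun _ : X => U) y) ∧
    ({x : X | x ∈ (fun _ : X => U) x} = U) ∧
    (∀ x : X, x ∈ (fun _ : X => U) x ↔ x ∈ U) ∧
    (∀ (φ : Fm P) (x : X), x ∈ U →
      ((ssSat v U x (Fm.K φ) ↔ evSat (fun _ : X => U) v x (Fm.K φ)) ∧
       (evSat (fun _ : X => U) v x (Fm.K φ) ↔ evSat (fun _ : X => U) v x (Fm.E φ)))) :=
  ⟨fun _ _ h => h, rfl, fun _ => Iff.rfl, fun φ _ _ =>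
    ⟨forall₂_congr fun y _ => ssSat_iff_evSat_const v U φ y, evSat_K_iff_E rfl⟩⟩

/-- Subset space models embed into evidence models: for `U ∈ 𝒮`, take the
evidence state `e_U` with constant interpretation `I_{e_U}(x) = U`. Then (E1)
holds, `U_{e_U} = U`, evidence scenarios `(x, e_U)` are exactly the epistemic
scenarios `(x, U)` (i.e. `x ∈ U`), and for all `φ`:
`(x,U) ⊨ Kφ` in the subset space model iff `(x,e_U) ⊨ Kφ` in the evidence
model iff `(x,e_U) ⊨ Eφ` in the evidence model. -/
theorem subset_space_to_evidence {X P : Type} (𝒮 : Set (Set X)) (v : P → Set X)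
    (U : Set X) (hU : U ∈ 𝒮) :
    (∀ x y : X, y ∈ (fun _ : X => U) x → y ∈ (fun _ : X => U) y) ∧
    ({x : X | x ∈ (fun _ : X => U) x} = U) ∧
    (∀ x : X, x ∈ (fun _ : X => U) x ↔ x ∈ U) ∧
    (∀ (φ : Fm P) (x : X), x ∈ U →
      ((ssSat v U x (Fm.K φ) ↔ evSat (fun _ : X => U) v x (Fm.K φ)) ∧
       (evSat (fun _ : X => U) v x (Fm.K φ) ↔ evSat (fun _ : X => U) v x (Fm.E φ)))) :=
  subset_space_to_evidence_general v U
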